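/- arXiv:0902.2441 — 2 statements merged into one kernel-verified Lean document; each statement's English description precedes it below -/
import Mathlib

section
/- Let q, n be positive integers with n ≤ q₀ - 2 where q₀ = (q-1)/2 if q is odd and q₀ = q/2 if q is even. Define Ĩ₀(q,n) as the set of n-tuples (p₁,...,p_n) of residues mod q with p_i ≢ ±p_j (mod q) for i < j and gcd(p₁,...,p_n,q)=1, modulo the equivalence: (p₁,...,p_n) ∼ (s₁,...,s_n) iff there exist l coprime to q and signs e_i ∈ {-1,1} such that (p₁,...,p_n) is a permutation of (e₁ls₁,...,e_nls_n) mod q. Then the number of equivalence classes |I₀(q,n)| is at least (1/q₀)·C(q₀, n). -/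
/-!
The tuples `1 = p₁ < p₂ < ⋯ < pₙ ≤ q₀` are admissible, and there are `C(q₀ - 1, n - 1)` of them.
Two of them lying in the class of a tuple `b` and matching their entry `1` with the same entry of
`b` are equal: the unit relating them is then `±1`, and the integers `1, …, q₀` are pairwise
distinct up to sign modulo `q`. So a class contains at most `n` of these tuples, and
`n · |I₀(q,n)| ≥ C(q₀ - 1, n - 1) = n · C(q₀, n) / q₀`.
-/
/-- Admissible tuples: `n`-tuples `(p₁,…,pₙ)` of residues mod `q` with
`pᵢ ≢ ±pⱼ (mod q)` for `i < j` and `gcd(p₁,…,pₙ,q) = 1` (the residues generate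
the unit ideal of `ZMod q`). -/
def AdmissibleTuple (q n : ℕ) : Type :=
  { p : Fin n → ZMod q //
      (∀ i j : Fin n, i < j → p i ≠ p j ∧ p i ≠ -p j) ∧
        Ideal.span (Set.range p) = (⊤ : Ideal (ZMod q)) }

/-- The equivalence: `(p₁,…,pₙ) ∼ (s₁,…,sₙ)` iff there are `l` coprime to `q`
(a unit of `ZMod q`) and signs `eᵢ ∈ {±1}` such that `(p₁,…,pₙ)` is a
permutation of `(e₁ls₁,…,eₙlsₙ)` mod `q`. -/
def TupleEquiv (q n : ℕ) (a b : AdmissibleTuple q n) : Prop :=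
  ∃ l : (ZMod q)ˣ, ∃ e : Fin n → ZMod q, (∀ i, e i = 1 ∨ e i = -1) ∧
    ∃ σ : Equiv.Perm (Fin n), ∀ i, a.val i = e i * (l : ZMod q) * b.val (σ i)

open Finset

def IsSign {R : Type*} [Ring R] (x : R) : Prop := x = 1 ∨ x = -1

namespace IsSign

variable {R : Type*} [Ring R] {x y : R}

lemma one : IsSign (1 : R) := Or.inl rfl

lemma mul_self (hx : IsSign x) : x * x = 1 := by
  rcases hx with rfl | rfl <;> simp

lemma mul (hx : IsSign x) (hy : IsSign y) : IsSign (x * y) := by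
  rcases hx with rfl | rfl <;> rcases hy with rfl | rfl <;> simp [IsSign]

end IsSign

def SignedScaling {ι R : Type*} [CommRing R] (σ : Equiv.Perm ι) (a b : ι → R) : Prop :=
  ∃ l : Rˣ, ∃ e : ι → R, (∀ i, IsSign (e i)) ∧ ∀ i, a i = e i * l * b (σ i)

namespace SignedScaling

variable {ι R : Type*} [CommRing R] {σ τ : Equiv.Perm ι} {a b c : ι → R}

lemma refl (a : ι → R) : SignedScaling (Equiv.refl ι) a a :=
  ⟨1, fun _ => 1, fun _ => IsSign.one, fun i => by simp⟩

lemma symm (h : SignedScaling σ a b) : SignedScaling σ.symm b a := by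
  obtain ⟨l, e, he, hab⟩ := h
  refine ⟨l⁻¹, fun i => e (σ.symm i), fun i => he _, fun i => ?_⟩
  have ha := hab (σ.symm i)
  rw [Equiv.apply_symm_apply] at ha
  calc b i = (e (σ.symm i) * e (σ.symm i)) * (↑l⁻¹ * ↑l) * b i := by
        rw [(he _).mul_self, Units.inv_mul]; ring
    _ = e (σ.symm i) * ↑l⁻¹ * a (σ.symm i) := by rw [ha]; ring

lemma trans (hab : SignedScaling σ a b) (hbc : SignedScaling τ b c) :
    SignedScaling (σ.trans τ) a c := by
  obtain ⟨l, e, he, hab⟩ := hab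
  obtain ⟨m, f, hf, hbc⟩ := hbc
  refine ⟨l * m, fun i => e i * f (σ i), fun i => (he i).mul (hf _), fun i => ?_⟩
  rw [hab, hbc, Equiv.trans_apply, Units.val_mul]
  ring

end SignedScaling

lemma tupleEquiv_iff {q n : ℕ} {a b : AdmissibleTuple q n} :
    TupleEquiv q n a b ↔ ∃ σ, SignedScaling σ a.val b.val := by
  constructor
  · rintro ⟨l, e, he, σ, hab⟩
    exact ⟨σ, l, e, he, hab⟩
  · rintro ⟨σ, l, e, he, hab⟩
    exact ⟨l, e, he, σ, hab⟩

lemma tupleEquiv_equivalence (q n : ℕ) : Equivalence (TupleEquiv q n) where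
  refl a := tupleEquiv_iff.mpr ⟨_, .refl _⟩
  symm h := by
    obtain ⟨σ, h⟩ := tupleEquiv_iff.mp h
    exact tupleEquiv_iff.mpr ⟨_, h.symm⟩
  trans hab hbc := by
    obtain ⟨σ, hab⟩ := tupleEquiv_iff.mp hab
    obtain ⟨τ, hbc⟩ := tupleEquiv_iff.mp hbc
    exact tupleEquiv_iff.mpr ⟨_, hab.trans hbc⟩

lemma tupleEquiv_out {q n : ℕ} (a : AdmissibleTuple q n) :
    TupleEquiv q n a (Quot.mk (TupleEquiv q n) a).out :=
  (tupleEquiv_equivalence q n).eqvGen_iff.mp (Quot.eqvGen_exact (Quot.out_eq _).symm)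

section Folding

variable {q q₀ : ℕ}

lemma eq_of_natCast_eq_or_eq_neg (hq₀q : 2 * q₀ ≤ q) {a b : ℕ} (ha : a ∈ Icc 1 q₀)
    (hb : b ∈ Icc 1 q₀) (h : (a : ZMod q) = b ∨ (a : ZMod q) = -b) : a = b := by
  rw [mem_Icc] at ha hb
  rcases h with h | h
  · rw [ZMod.natCast_eq_natCast_iff' a b q, Nat.mod_eq_of_lt (by omega),
      Nat.mod_eq_of_lt (by omega)] at h
    exact h
  · have hdvd : q ∣ a + b := by
      rw [← ZMod.natCast_eq_zero_iff, Nat.cast_add, h, neg_add_cancel]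
    have := Nat.le_of_dvd (by omega) hdvd
    omega

lemma SignedScaling.natCast_eq_comp (hq₀q : 2 * q₀ ≤ q) {ι : Type*} {σ : Equiv.Perm ι}
    {a b : ι → ℕ} (ha : ∀ i, a i ∈ Icc 1 q₀) (hb : ∀ i, b i ∈ Icc 1 q₀)
    (h : SignedScaling σ (fun i => (a i : ZMod q)) (fun i => (b i : ZMod q)))
    {i₀ : ι} (ha₀ : a i₀ = 1) (hb₀ : b (σ i₀) = 1) : a = b ∘ σ := by
  obtain ⟨l, e, he, hab⟩ := h
  have hl : (l : ZMod q) = e i₀ := by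
    have h₀ := hab i₀
    simp only [ha₀, hb₀, Nat.cast_one, mul_one] at h₀
    calc (l : ZMod q) = e i₀ * (e i₀ * l) := by rw [← mul_assoc, (he i₀).mul_self, one_mul]
      _ = e i₀ := by rw [← h₀, mul_one]
  funext i
  refine eq_of_natCast_eq_or_eq_neg hq₀q (ha i) (hb (σ i)) ?_
  have hi : (a i : ZMod q) = e i * e i₀ * b (σ i) := by rw [← hl]; exact hab i
  rcases (he i).mul (he i₀) with hs | hs
  · left; rw [hi, hs, one_mul, Function.comp_apply]
  · right; rw [hi, hs, neg_one_mul, Function.comp_apply]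

lemma natCast_admissible (hq₀q : 2 * q₀ ≤ q) {n : ℕ} {a : Fin n → ℕ} (ha : Function.Injective a)
    (hmem : ∀ i, a i ∈ Icc 1 q₀) (h1 : 1 ∈ Set.range a) :
    (∀ i j : Fin n, i < j → (a i : ZMod q) ≠ a j ∧ (a i : ZMod q) ≠ -a j) ∧
      Ideal.span (Set.range fun i => (a i : ZMod q)) = ⊤ := by
  refine ⟨fun i j hij => ?_, ?_⟩
  · have hne := ha.ne hij.ne
    exact ⟨fun h => hne (eq_of_natCast_eq_or_eq_neg hq₀q (hmem i) (hmem j) (.inl h)),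
      fun h => hne (eq_of_natCast_eq_or_eq_neg hq₀q (hmem i) (hmem j) (.inr h))⟩
  · obtain ⟨i, hi⟩ := h1
    rw [Ideal.eq_top_iff_one]
    exact Ideal.subset_span ⟨i, by simp [hi]⟩

end Folding

section Normalized

variable {m q₀ : ℕ}

lemma one_notMem_of_mem_powersetCard {A : Finset ℕ} (hA : A ∈ powersetCard m (Icc 2 q₀)) :
    1 ∉ A := fun h => by
  have := (mem_powersetCard.mp hA).1 h
  simp at this

lemma card_insert_one_of_mem_powersetCard {A : Finset ℕ} (hA : A ∈ powersetCard m (Icc 2 q₀)) :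
    (insert 1 A).card = m + 1 := by
  rw [card_insert_of_notMem (one_notMem_of_mem_powersetCard hA), (mem_powersetCard.mp hA).2]

def enumWithOne (A : powersetCard m (Icc 2 q₀)) : Fin (m + 1) ↪o ℕ :=
  (insert 1 A.1).orderEmbOfFin (card_insert_one_of_mem_powersetCard A.2)

lemma range_enumWithOne (A : powersetCard m (Icc 2 q₀)) :
    Set.range (enumWithOne A) = insert 1 (A.1 : Set ℕ) := by
  rw [enumWithOne, range_orderEmbOfFin, coe_insert]

lemma one_le_of_mem_insert_one {A : Finset ℕ} (hA : A ∈ powersetCard m (Icc 2 q₀)) {x : ℕ}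
    (hx : x ∈ insert 1 A) : 1 ≤ x := by
  rcases mem_insert.mp hx with rfl | hx
  · rfl
  · have := (mem_powersetCard.mp hA).1 hx
    rw [mem_Icc] at this
    omega

lemma enumWithOne_mem_Icc (hq₀ : 1 ≤ q₀) (A : powersetCard m (Icc 2 q₀)) (i : Fin (m + 1)) :
    enumWithOne A i ∈ Icc 1 q₀ := by
  have hi : enumWithOne A i ∈ insert 1 A.1 := by
    rw [← mem_coe, coe_insert, ← range_enumWithOne]
    exact ⟨i, rfl⟩
  refine mem_Icc.mpr ⟨one_le_of_mem_insert_one A.2 hi, ?_⟩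
  rcases mem_insert.mp hi with hi | hi
  · rw [hi]; exact hq₀
  · exact (mem_Icc.mp ((mem_powersetCard.mp A.2).1 hi)).2

lemma enumWithOne_zero (A : powersetCard m (Icc 2 q₀)) : enumWithOne A 0 = 1 :=
  (orderEmbOfFin_zero _ m.succ_pos).trans <| le_antisymm (min'_le _ _ (mem_insert_self 1 _))
    (le_min' _ _ _ fun _ hy => one_le_of_mem_insert_one A.2 hy)

lemma eq_of_range_enumWithOne_eq {A A' : powersetCard m (Icc 2 q₀)}
    (h : Set.range (enumWithOne A) = Set.range (enumWithOne A')) : A = A' := by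
  rw [range_enumWithOne, range_enumWithOne, ← coe_insert, ← coe_insert, coe_inj] at h
  rw [Subtype.ext_iff, ← erase_insert (one_notMem_of_mem_powersetCard A.2),
    ← erase_insert (one_notMem_of_mem_powersetCard A'.2), h]

def toAdmissible {q : ℕ} (hq₀q : 2 * q₀ ≤ q) (hq₀ : 1 ≤ q₀) (A : powersetCard m (Icc 2 q₀)) :
    AdmissibleTuple q (m + 1) :=
  ⟨fun i => (enumWithOne A i : ZMod q), natCast_admissible hq₀q (enumWithOne A).injective
    (enumWithOne_mem_Icc hq₀ A) ⟨0, enumWithOne_zero A⟩⟩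

end Normalized

instance {q n : ℕ} [NeZero q] : Finite (Quot (TupleEquiv q n)) :=
  have : Finite (AdmissibleTuple q n) := Subtype.finite
  Quot.finite _

/-- Each class contains at most `m + 1` of the tuples `toAdmissible A`: such a tuple is determined
by its class together with the entry of the class representative that its `1` is matched with. -/
theorem card_powersetCard_le_card_quot_mul {q q₀ : ℕ} (hq₀q : 2 * q₀ ≤ q) (hq₀ : 1 ≤ q₀) (m : ℕ) :
    (powersetCard m (Icc 2 q₀)).card ≤ Nat.card (Quot (TupleEquiv q (m + 1))) * (m + 1) := by
  have : NeZero q := ⟨by omega⟩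
  let cls (A : powersetCard m (Icc 2 q₀)) :=
    Quot.mk (TupleEquiv q (m + 1)) (toAdmissible hq₀q hq₀ A)
  have hrep (A) : ∃ σ, SignedScaling σ (toAdmissible hq₀q hq₀ A).val (cls A).out.val :=
    tupleEquiv_iff.mp (tupleEquiv_out _)
  choose σ hσ using hrep
  have hinj : Function.Injective fun A => (cls A, σ A 0) := by
    intro A A' h
    obtain ⟨hcls, hσ₀⟩ := Prod.mk.inj h
    have hAA' := (hσ A).trans ((hcls ▸ hσ A').symm)
    have hfix : (σ A).trans (σ A').symm 0 = 0 := by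
      rw [Equiv.trans_apply, hσ₀, Equiv.symm_apply_apply]
    have heq := hAA'.natCast_eq_comp hq₀q (enumWithOne_mem_Icc hq₀ A) (enumWithOne_mem_Icc hq₀ A')
      (enumWithOne_zero A) (by rw [hfix]; exact enumWithOne_zero A')
    exact eq_of_range_enumWithOne_eq (by rw [heq, EquivLike.range_comp])
  have := Nat.card_le_card_of_injective _ hinj
  rwa [Nat.card_eq_finsetCard, Nat.card_prod, Nat.card_fin] at this

theorem stmt_13_general (q n q₀ : ℕ) (hn : 2 ≤ n)
    (hq₀ : q₀ = if q % 2 = 1 then (q - 1) / 2 else q / 2) :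
    (Nat.choose q₀ n : ℚ) / q₀ ≤ Nat.card (Quot (TupleEquiv q n)) := by
  obtain ⟨m, rfl⟩ : ∃ m, n = m + 1 := ⟨n - 1, by omega⟩
  have hq₀q : 2 * q₀ ≤ q := by split_ifs at hq₀ <;> omega
  obtain rfl | ⟨p, rfl⟩ : q₀ = 0 ∨ ∃ p, q₀ = p + 1 := by cases q₀ <;> simp
  · simp -- division by `0` in `ℚ`
  have hcount := card_powersetCard_le_card_quot_mul hq₀q p.succ_pos m
  rw [card_powersetCard, Nat.card_Icc, show p + 1 + 1 - 2 = p by omega] at hcount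
  set N := Nat.card (Quot (TupleEquiv q (m + 1)))
  have hchoose : (p + 1).choose (m + 1) ≤ N * (p + 1) := by
    refine Nat.le_of_mul_le_mul_right ?_ m.succ_pos
    calc (p + 1).choose (m + 1) * (m + 1) = (p + 1) * p.choose m := (p.add_one_mul_choose_eq m).symm
      _ ≤ (p + 1) * (N * (m + 1)) := Nat.mul_le_mul_left _ hcount
      _ = N * (p + 1) * (m + 1) := by ring
  rw [div_le_iff₀ (by positivity)]
  exact_mod_cast hchoose

/-- The number of equivalence classes `|I₀(q,n)|` is at least `(1/q₀)·C(q₀,n)`,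
where `q₀ = (q-1)/2` for `q` odd and `q₀ = q/2` for `q` even. -/
theorem stmt_13 (q n q₀ : ℕ) (hq : 0 < q) (hn : 2 ≤ n)
    (hq₀ : q₀ = if q % 2 = 1 then (q - 1) / 2 else q / 2) (hnq₀ : n ≤ q₀ - 2) :
    (Nat.choose q₀ n : ℚ) / q₀ ≤ Nat.card (Quot (TupleEquiv q n)) :=
  stmt_13_general q n q₀ hn hq₀
end

section
/- With notation as in the equivalence-class counting for lens spaces: let q₀, n, k = q₀ - n, and let r be the number of residues mod q not coprime to q that are ≤ q₀. Set u = r - k if r > k and u = 0 if r ≤ k. Then |I₀(q,n)| ≥ ∑_{t=u}^{r} (1/(n-t))·C(q₀-1-r, n-1-t)·C(r, t). -/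
open Finset

namespace ZMod

lemma natAbs_valMinAbs_eq_of_eq_or_eq_neg {n a : ℕ} {z : ZMod n} (ha : a ≤ n / 2)
    (h : z = a ∨ z = -a) : z.valMinAbs.natAbs = a := by
  rcases h with rfl | rfl
  · simp [valMinAbs_natCast_of_le_half ha]
  · rw [natAbs_valMinAbs_neg, valMinAbs_natCast_of_le_half ha, Int.natAbs_natCast]

lemma eq_of_natCast_eq_or_eq_neg {n a b : ℕ} (ha : a ≤ n / 2) (hb : b ≤ n / 2)
    (h : (a : ZMod n) = b ∨ (a : ZMod n) = -b) : a = b := by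
  rw [← natAbs_valMinAbs_eq_of_eq_or_eq_neg ha (Or.inl rfl),
    natAbs_valMinAbs_eq_of_eq_or_eq_neg hb h]

end ZMod

namespace Finset

variable {α β : Type*}

theorem sum_one_div_card_fiber [DecidableEq β] {K : Type*} [DivisionSemiring K] [CharZero K]
    (s : Finset α) (f : α → β) :
    ∑ a ∈ s, (1 : K) / #{x ∈ s | f x = f a} = #(s.image f) := by
  rw [card_eq_sum_ones, Nat.cast_sum, Nat.cast_one]
  refine (sum_image' _ fun a ha => ?_).symm
  have hfiber : ∀ x ∈ {x ∈ s | f x = f a}, {y ∈ s | f y = f x} = {y ∈ s | f y = f a} :=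
    fun x hx => by rw [(mem_filter.1 hx).2]
  have hpos : (#{x ∈ s | f x = f a} : K) ≠ 0 :=
    Nat.cast_ne_zero.2 (card_ne_zero_of_mem (mem_filter.2 ⟨ha, rfl⟩))
  rw [sum_congr rfl fun x hx => by rw [hfiber x hx], sum_const, nsmul_eq_mul,
    mul_one_div_cancel hpos]

theorem sum_one_div_le_card_image [DecidableEq β] {K : Type*} [Semifield K] [LinearOrder K]
    [IsStrictOrderedRing K] (s : Finset α) (f : α → β) (w : α → K)
    (hw : ∀ a ∈ s, (#{x ∈ s | f x = f a} : K) ≤ w a) :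
    ∑ a ∈ s, 1 / w a ≤ #(s.image f) := by
  rw [← sum_one_div_card_fiber s f]
  refine sum_le_sum fun a ha => one_div_le_one_div_of_le ?_ (hw a ha)
  exact Nat.cast_pos.2 (card_pos.2 ⟨a, mem_filter.2 ⟨ha, rfl⟩⟩)

theorem choose_mul_choose_le_card_powersetCard_filter [DecidableEq α] (s : Finset α)
    (p : α → Prop) [DecidablePred p] {m t : ℕ} (ht : t ≤ m) :
    (#{x ∈ s | ¬p x}).choose (m - t) * (#{x ∈ s | p x}).choose t ≤
      #{T ∈ s.powersetCard m | #{x ∈ T | p x} = t} := by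
  rw [← card_powersetCard, ← card_powersetCard, ← card_product]
  have hsplit : ∀ A ⊆ {x ∈ s | ¬p x}, ∀ B ⊆ {x ∈ s | p x},
      {x ∈ A ∪ B | p x} = B ∧ {x ∈ A ∪ B | ¬p x} = A := by
    intro A hA B hB
    constructor <;> ext x <;> grind
  refine card_le_card_of_injOn (fun AB => AB.1 ∪ AB.2) ?_ ?_
  · rintro ⟨A, B⟩ hAB
    simp only [coe_product, Set.mem_prod, mem_coe, mem_powersetCard] at hAB
    obtain ⟨⟨hA, hAcard⟩, hB, hBcard⟩ := hAB
    have hdisj : Disjoint A B := disjoint_of_subset_left hA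
      (disjoint_of_subset_right hB (disjoint_filter_filter_not s s p).symm)
    simp only [coe_filter, Set.mem_ofPred_eq, mem_powersetCard]
    refine ⟨⟨union_subset (hA.trans (filter_subset _ _)) (hB.trans (filter_subset _ _)), ?_⟩,
      ?_⟩
    · rw [card_union_of_disjoint hdisj, hAcard, hBcard, Nat.sub_add_cancel ht]
    · rw [(hsplit A hA B hB).1, hBcard]
  · rintro ⟨A, B⟩ hAB ⟨A', B'⟩ hAB' h
    simp only [coe_product, Set.mem_prod, mem_coe, mem_powersetCard] at hAB hAB'
    have h₁ := hsplit A hAB.1.1 B hAB.2.1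
    have h₂ := hsplit A' hAB'.1.1 B' hAB'.2.1
    simp only at h
    exact Prod.ext (by rw [← h₁.2, ← h₂.2, h]) (by rw [← h₁.1, ← h₂.1, h])

end Finset

namespace TupleEquiv

variable {q n : ℕ}

theorem refl (a : AdmissibleTuple q n) : TupleEquiv q n a a :=
  ⟨1, fun _ => 1, fun _ => Or.inl rfl, Equiv.refl _, fun i => by simp⟩

theorem symm {a b : AdmissibleTuple q n} (h : TupleEquiv q n a b) : TupleEquiv q n b a := by
  obtain ⟨l, e, he, σ, hσ⟩ := h
  refine ⟨l⁻¹, fun j => e (σ.symm j), fun j => he _, σ.symm, fun j => ?_⟩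
  have hsq : e (σ.symm j) * e (σ.symm j) = 1 := by rcases he (σ.symm j) with h | h <;> simp [h]
  have hl : (↑l⁻¹ : ZMod q) * l = 1 := Units.inv_mul l
  rw [hσ, Equiv.apply_symm_apply]
  linear_combination (-(↑l⁻¹ * ↑l * b.val j)) * hsq - b.val j * hl

theorem trans {a b c : AdmissibleTuple q n} (hab : TupleEquiv q n a b)
    (hbc : TupleEquiv q n b c) : TupleEquiv q n a c := by
  obtain ⟨l, e, he, σ, hσ⟩ := hab
  obtain ⟨m, f, hf, τ, hτ⟩ := hbc
  refine ⟨l * m, fun i => e i * f (σ i), fun i => ?_, σ.trans τ, fun i => ?_⟩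
  · rcases he i with h | h <;> rcases hf (σ i) with h' | h' <;> simp [h, h']
  · rw [hσ, hτ, Units.val_mul, Equiv.trans_apply]
    ring

theorem equivalence : Equivalence (TupleEquiv q n) := ⟨refl, symm, trans⟩

theorem of_quot_mk_eq {a b : AdmissibleTuple q n}
    (h : Quot.mk (TupleEquiv q n) a = Quot.mk (TupleEquiv q n) b) : TupleEquiv q n a b :=
  equivalence.eqvGen_iff.1 (Quot.eqvGen_exact h)

end TupleEquiv

def normalizedReps (q n : ℕ) : Finset (Finset ℕ) :=
  {S ∈ (Icc 1 (q / 2)).powersetCard n | 1 ∈ S}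

def nonCoprimeCount (q : ℕ) (S : Finset ℕ) : ℕ := #{x ∈ S | Nat.gcd x q ≠ 1}

section NormalizedReps

variable {q n : ℕ}

lemma mem_normalizedReps {S : Finset ℕ} :
    S ∈ normalizedReps q n ↔ S ⊆ Icc 1 (q / 2) ∧ #S = n ∧ 1 ∈ S := by
  simp [normalizedReps, and_assoc]

lemma one_div_sub_nonCoprimeCount_nonneg {S : Finset ℕ} (hS : S ∈ normalizedReps q n) :
    0 ≤ 1 / ((n : ℚ) - nonCoprimeCount q S) :=
  one_div_nonneg.2 (sub_nonneg.2 (Nat.cast_le.2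
    ((card_filter_le _ _).trans (mem_normalizedReps.1 hS).2.1.le)))

lemma admissible_natCast {p : Fin n → ℕ} (hp : StrictMono p) (hle : ∀ i, p i ≤ q / 2)
    (h1 : 1 ∈ Set.range p) :
    (∀ i j : Fin n, i < j → (p i : ZMod q) ≠ p j ∧ (p i : ZMod q) ≠ -p j) ∧
      Ideal.span (Set.range fun i => (p i : ZMod q)) = ⊤ := by
  refine ⟨fun i j hij => not_or.1 fun h => ?_, ?_⟩
  · exact (hp hij).ne (ZMod.eq_of_natCast_eq_or_eq_neg (hle i) (hle j) h)
  · obtain ⟨i, hi⟩ := h1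
    exact (Ideal.eq_top_iff_one _).2 (Ideal.subset_span ⟨i, by simp [hi]⟩)

lemma one_mem_range_orderEmbOfFin {S : Finset ℕ} (hS : S ∈ normalizedReps q n) :
    1 ∈ Set.range (S.orderEmbOfFin (mem_normalizedReps.1 hS).2.1) := by
  rw [range_orderEmbOfFin, mem_coe]
  exact (mem_normalizedReps.1 hS).2.2

noncomputable def normalizedTuple (S : normalizedReps q n) : AdmissibleTuple q n :=
  ⟨fun i => (S.1.orderEmbOfFin (mem_normalizedReps.1 S.2).2.1 i : ℕ),
    admissible_natCast (orderEmbOfFin _ _).strictMono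
      (fun i => (mem_Icc.1 ((mem_normalizedReps.1 S.2).1 (orderEmbOfFin_mem _ _ i))).2)
      (one_mem_range_orderEmbOfFin S.2)⟩

lemma exists_coprime_eq_image_of_tupleEquiv {S S' : normalizedReps q n}
    (h : TupleEquiv q n (normalizedTuple S) (normalizedTuple S')) :
    ∃ x ∈ S'.1, x.Coprime q ∧
      S.1 = S'.1.image fun y : ℕ => ((x : ZMod q)⁻¹ * y).valMinAbs.natAbs := by
  obtain ⟨l, e, he, σ, hσ⟩ := h
  obtain ⟨hsub, hcard, -⟩ := mem_normalizedReps.1 S.2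
  have hcard' := (mem_normalizedReps.1 S'.2).2.1
  have hσ' : ∀ i, (S.1.orderEmbOfFin hcard i : ZMod q) =
      e i * l * (S'.1.orderEmbOfFin hcard' (σ i) : ZMod q) := hσ
  obtain ⟨i₀, hi₀⟩ := one_mem_range_orderEmbOfFin S.2
  set x := S'.1.orderEmbOfFin hcard' (σ i₀)
  have hx : e i₀ * l * (x : ZMod q) = 1 := by simpa [hi₀] using (hσ' i₀).symm
  have hinv : (x : ZMod q)⁻¹ = e i₀ * l :=
    ZMod.inv_eq_of_mul_eq_one _ _ _ (by rw [mul_comm, hx])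
  refine ⟨x, orderEmbOfFin_mem _ _ _,
    (ZMod.isUnit_iff_coprime x q).1 (IsUnit.of_mul_eq_one_right _ hx), ?_⟩
  refine eq_of_subset_of_card_le (fun z hz => ?_)
    (card_image_le.trans (hcard'.trans hcard.symm).le)
  obtain ⟨i, rfl⟩ : z ∈ Set.range (S.1.orderEmbOfFin hcard) := by
    rwa [range_orderEmbOfFin, mem_coe]
  refine mem_image.2 ⟨_, orderEmbOfFin_mem S'.1 hcard' (σ i),
    ZMod.natAbs_valMinAbs_eq_of_eq_or_eq_neg (mem_Icc.1 (hsub (orderEmbOfFin_mem _ _ i))).2 ?_⟩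
  rw [hinv, hσ' i]
  grind

lemma card_fiber_add_nonCoprimeCount_le [DecidableEq (Quot (TupleEquiv q n))]
    (S : normalizedReps q n) :
    #{S' | Quot.mk (TupleEquiv q n) (normalizedTuple S') = Quot.mk _ (normalizedTuple S)} +
      nonCoprimeCount q S ≤ n := by
  have hfiber : #{S' | Quot.mk (TupleEquiv q n) (normalizedTuple S') =
      Quot.mk _ (normalizedTuple S)} ≤ #{x ∈ S.1 | x.Coprime q} :=
    calc _ ≤ #({x ∈ S.1 | x.Coprime q}.image fun x : ℕ =>
          S.1.image fun y : ℕ => ((x : ZMod q)⁻¹ * y).valMinAbs.natAbs) := by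
          refine card_le_card_of_injOn Subtype.val (fun S' hS' => ?_) Subtype.val_injective.injOn
          obtain ⟨x, hx, hcop, hS'⟩ := exists_coprime_eq_image_of_tupleEquiv
            (TupleEquiv.of_quot_mk_eq (mem_filter.1 hS').2)
          exact mem_image.2 ⟨x, mem_filter.2 ⟨hx, hcop⟩, hS'.symm⟩
      _ ≤ _ := card_image_le
  have hsplit := card_filter_add_card_filter_not (s := S.1) (fun x => Nat.gcd x q ≠ 1)
  simp only [not_not] at hsplit
  simp only [Nat.coprime_iff_gcd_eq_one] at hfiber
  have hcard := (mem_normalizedReps.1 S.2).2.1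
  rw [nonCoprimeCount]
  omega

lemma choose_mul_choose_le_card_normalizedReps (hq : 2 ≤ q) {t : ℕ} (ht : t < n) :
    (q / 2 - 1 - nonCoprimeCount q (Icc 1 (q / 2))).choose (n - 1 - t) *
        (nonCoprimeCount q (Icc 1 (q / 2))).choose t ≤
      #{S ∈ normalizedReps q n | nonCoprimeCount q S = t} := by
  have hr : nonCoprimeCount q (Icc 1 (q / 2)) = #{x ∈ Icc 2 (q / 2) | Nat.gcd x q ≠ 1} := by
    rw [nonCoprimeCount]
    congr 1
    ext x
    by_cases hx : x = 1 <;> simp [hx]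
    omega
  have hunits : #{x ∈ Icc 2 (q / 2) | ¬Nat.gcd x q ≠ 1} =
      q / 2 - 1 - #{x ∈ Icc 2 (q / 2) | Nat.gcd x q ≠ 1} := by
    have := card_filter_add_card_filter_not (s := Icc 2 (q / 2)) (fun x => Nat.gcd x q ≠ 1)
    rw [Nat.card_Icc] at this
    omega
  rw [hr, ← hunits]
  calc _ ≤ #{T ∈ (Icc 2 (q / 2)).powersetCard (n - 1) | #{x ∈ T | Nat.gcd x q ≠ 1} = t} :=
        choose_mul_choose_le_card_powersetCard_filter _ _ (by omega)
    _ ≤ _ := by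
        have h1 : ∀ T ∈ (Icc 2 (q / 2)).powersetCard (n - 1), 1 ∉ T :=
          fun T hT h => by simpa using (mem_powersetCard.1 hT).1 h
        refine card_le_card_of_injOn (insert 1) (fun T hT => ?_) (fun T hT T' hT' h => ?_)
        · rw [mem_coe, mem_filter] at hT ⊢
          obtain ⟨hT, hcount⟩ := hT
          obtain ⟨hsub, hcard⟩ := mem_powersetCard.1 hT
          refine ⟨mem_normalizedReps.2 ⟨insert_subset (by simp; omega)
            (hsub.trans (Icc_subset_Icc_left one_le_two)), ?_, mem_insert_self _ _⟩, ?_⟩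
          · rw [card_insert_of_notMem (h1 T hT), hcard]
            omega
          · rw [nonCoprimeCount, filter_insert, if_neg (by simp), hcount]
        · rw [← erase_insert (h1 T (mem_filter.1 hT).1),
            ← erase_insert (h1 T' (mem_filter.1 hT').1)]
          exact congrArg (·.erase 1) h

lemma one_div_mul_choose_mul_choose_le_sum (hq : 2 ≤ q) (t : ℕ) :
    1 / ((n : ℚ) - t) * (q / 2 - 1 - nonCoprimeCount q (Icc 1 (q / 2))).choose (n - 1 - t) *
        (nonCoprimeCount q (Icc 1 (q / 2))).choose t ≤
      ∑ S ∈ normalizedReps q n with nonCoprimeCount q S = t,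
        1 / ((n : ℚ) - nonCoprimeCount q S) := by
  rcases lt_or_ge t n with ht | ht
  · have hpos : (0 : ℚ) ≤ 1 / ((n : ℚ) - t) :=
      one_div_nonneg.2 (sub_nonneg.2 (by exact_mod_cast ht.le))
    rw [sum_congr rfl fun S hS => by rw [(mem_filter.1 hS).2], sum_const, nsmul_eq_mul,
      mul_comm _ (1 / _), mul_assoc]
    gcongr
    exact_mod_cast choose_mul_choose_le_card_normalizedReps hq ht
  · have hneg : 1 / ((n : ℚ) - t) ≤ 0 := one_div_nonpos.2 (sub_nonpos.2 (by exact_mod_cast ht))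
    refine le_trans ?_ (sum_nonneg fun S hS =>
      one_div_sub_nonCoprimeCount_nonneg (mem_filter.1 hS).1)
    exact mul_nonpos_of_nonpos_of_nonneg (mul_nonpos_of_nonpos_of_nonneg hneg (by positivity))
      (by positivity)

end NormalizedReps

theorem stmt_14_general (q n q₀ r u : ℕ) (hn : 2 ≤ n)
    (hq₀ : q₀ = if q % 2 = 1 then (q - 1) / 2 else q / 2) (hnq₀ : n ≤ q₀ - 2)
    (hr : r = ((Finset.Icc 1 q₀).filter (fun x => Nat.gcd x q ≠ 1)).card) :
    ∑ t ∈ Finset.Icc u r,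
        (1 / ((n : ℚ) - t)) * (Nat.choose (q₀ - 1 - r) (n - 1 - t)) * (Nat.choose r t)
      ≤ Nat.card (Quot (TupleEquiv q n)) := by
  classical
  have hq : 2 ≤ q := by split_ifs at hq₀ <;> omega
  obtain rfl : q₀ = q / 2 := by split_ifs at hq₀ <;> omega
  obtain rfl : r = nonCoprimeCount q (Icc 1 (q / 2)) := hr
  have : NeZero q := ⟨by omega⟩
  have : Finite (AdmissibleTuple q n) := Subtype.finite
  have := Fintype.ofFinite (Quot (TupleEquiv q n))
  calc _ ≤ ∑ t ∈ Icc u (nonCoprimeCount q (Icc 1 (q / 2))),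
        ∑ S ∈ normalizedReps q n with nonCoprimeCount q S = t,
          1 / ((n : ℚ) - nonCoprimeCount q S) :=
        sum_le_sum fun t _ => one_div_mul_choose_mul_choose_le_sum hq t
    _ ≤ ∑ S ∈ normalizedReps q n, 1 / ((n : ℚ) - nonCoprimeCount q S) :=
        sum_fiberwise_le_sum_of_sum_fiber_nonneg fun t _ => sum_nonneg fun S hS =>
          one_div_sub_nonCoprimeCount_nonneg (mem_filter.1 hS).1
    _ = ∑ S : normalizedReps q n, 1 / ((n : ℚ) - nonCoprimeCount q S) := (sum_coe_sort _ _).symm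
    _ ≤ #(univ.image fun S : normalizedReps q n =>
          Quot.mk (TupleEquiv q n) (normalizedTuple S)) :=
        sum_one_div_le_card_image _ _ _ fun S _ =>
          le_sub_iff_add_le.2 (by exact_mod_cast card_fiber_add_nonCoprimeCount_le S)
    _ ≤ Nat.card (Quot (TupleEquiv q n)) := by
        rw [Nat.card_eq_fintype_card]
        exact_mod_cast card_le_univ _

/-- With `k = q₀ - n`, `r` the number of residues `≤ q₀` not coprime to `q`, and
`u = r - k` if `r > k`, `u = 0` otherwise, the number of equivalence classes
`|I₀(q,n)|` is at least `∑_{t=u}^{r} (1/(n-t))·C(q₀-1-r, n-1-t)·C(r,t)`. -/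
theorem stmt_14 (q n q₀ k r u : ℕ) (hq : 0 < q) (hn : 2 ≤ n)
    (hq₀ : q₀ = if q % 2 = 1 then (q - 1) / 2 else q / 2) (hnq₀ : n ≤ q₀ - 2)
    (hk : k = q₀ - n)
    (hr : r = ((Finset.Icc 1 q₀).filter (fun x => Nat.gcd x q ≠ 1)).card)
    (hu : u = if k < r then r - k else 0) :
    ∑ t ∈ Finset.Icc u r,
        (1 / ((n : ℚ) - t)) * (Nat.choose (q₀ - 1 - r) (n - 1 - t)) * (Nat.choose r t)
      ≤ Nat.card (Quot (TupleEquiv q n)) :=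
  stmt_14_general q n q₀ r u hn hq₀ hnq₀ hr
end
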